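/- Let τ ∈ ℝ. Define c_n = (τ^n / n!)·√(1 + τ²/(n+1)²) for even n ≥ 0. Then the sum B(τ) = ∑_{n even} c_n satisfies B(τ) ≤ exp(τ²). -/
import Mathlib

lemma two_pow_mul_fact_le (m : ℕ) : 2 ^ m * m.factorial ≤ (2 * m).factorial := by
  induction m with
  | zero => simp
  | succ k ih =>
    have h : 2 * (k + 1) = (2 * k) + 1 + 1 := by ring
    rw [h, Nat.factorial_succ, Nat.factorial_succ, Nat.factorial_succ, pow_succ]
    calc 2 ^ k * 2 * ((k + 1) * k.factorial)
        = 2 * (k + 1) * (2 ^ k * k.factorial) := by ring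
      _ ≤ 2 * (k + 1) * (2 * k).factorial := Nat.mul_le_mul_left _ ih
      _ ≤ (2 * k + 1 + 1) * ((2 * k + 1) * (2 * k).factorial) := by
          rw [show 2 * (k + 1) = 2 * k + 1 + 1 from by ring]
          exact Nat.mul_le_mul_left _ (Nat.le_mul_of_pos_left _ (by omega))

/-- The RTE normalization factor `B(τ) = ∑_{n even} (τ^n/n!)·√(1 + τ²/(n+1)²)` satisfies
`B(τ) ≤ exp (τ²)`. -/
theorem rte_normalization_le (τ : ℝ) :
    (∑' m : ℕ, τ ^ (2 * m) / ((2 * m).factorial : ℝ) *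
        Real.sqrt (1 + τ ^ 2 / (2 * (m : ℝ) + 1) ^ 2)) ≤ Real.exp (τ ^ 2) := by
  set f : ℕ → ℝ := fun m => τ ^ (2 * m) / ((2 * m).factorial : ℝ) *
      Real.sqrt (1 + τ ^ 2 / (2 * (m : ℝ) + 1) ^ 2) with hf
  set g : ℕ → ℝ := fun m => Real.sqrt (1 + τ ^ 2) * ((τ ^ 2 / 2) ^ m / m.factorial) with hg
  have hfg : ∀ m, f m ≤ g m := by
    intro m
    have h1 : τ ^ (2 * m) / ((2 * m).factorial : ℝ) ≤ (τ ^ 2 / 2) ^ m / m.factorial := by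
      rw [pow_mul, div_pow]
      rw [div_le_div_iff₀ (by positivity) (by positivity), div_mul_eq_mul_div,
        le_div_iff₀ (by positivity)]
      have : ((2 : ℝ) ^ m * m.factorial) ≤ ((2 * m).factorial : ℝ) := by
        exact_mod_cast two_pow_mul_fact_le m
      nlinarith [pow_nonneg (sq_nonneg τ) m]
    have h2 : Real.sqrt (1 + τ ^ 2 / (2 * (m : ℝ) + 1) ^ 2) ≤ Real.sqrt (1 + τ ^ 2) := by
      apply Real.sqrt_le_sqrt
      have hden : (1 : ℝ) ≤ (2 * (m : ℝ) + 1) ^ 2 := by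
        nlinarith [Nat.cast_nonneg (α := ℝ) m]
      have : τ ^ 2 / (2 * (m : ℝ) + 1) ^ 2 ≤ τ ^ 2 := by
        rw [div_le_iff₀ (by positivity)]
        nlinarith [sq_nonneg τ]
      linarith
    calc f m ≤ ((τ ^ 2 / 2) ^ m / m.factorial) * Real.sqrt (1 + τ ^ 2) := by
          apply mul_le_mul h1 h2 (Real.sqrt_nonneg _) (by positivity)
      _ = g m := by ring
  have hfnn : ∀ m, 0 ≤ f m := by
    intro m
    have : (0 : ℝ) ≤ τ ^ (2 * m) := by rw [pow_mul]; positivity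
    positivity
  have hgs : Summable g := (Real.summable_pow_div_factorial (τ ^ 2 / 2)).mul_left _
  have hfs : Summable f := Summable.of_nonneg_of_le hfnn hfg hgs
  have htsum : (∑' m, f m) ≤ ∑' m, g m := Summable.tsum_le_tsum hfg hfs hgs
  have hgsum : (∑' m, g m) = Real.sqrt (1 + τ ^ 2) * Real.exp (τ ^ 2 / 2) := by
    rw [hg, tsum_mul_left]
    congr 1
    rw [Real.exp_eq_exp_ℝ, NormedSpace.exp_eq_tsum_div]
  have hsqrt : Real.sqrt (1 + τ ^ 2) ≤ Real.exp (τ ^ 2 / 2) := by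
    rw [show Real.exp (τ ^ 2 / 2) = Real.sqrt (Real.exp (τ ^ 2)) from Real.exp_half _]
    exact Real.sqrt_le_sqrt (by linarith [Real.add_one_le_exp (τ ^ 2)])
  calc (∑' m, f m) ≤ Real.sqrt (1 + τ ^ 2) * Real.exp (τ ^ 2 / 2) := by
        rw [← hgsum]; exact htsum
    _ ≤ Real.exp (τ ^ 2 / 2) * Real.exp (τ ^ 2 / 2) := by
        apply mul_le_mul_of_nonneg_right hsqrt (Real.exp_nonneg _)
    _ = Real.exp (τ ^ 2) := by rw [← Real.exp_add]; ring_nf
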